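/- arXiv:2605.12744 — 3 statements merged into one kernel-verified Lean document; each statement's English description precedes it below -/
import Mathlib

section
/- There are exactly 22 wide decomposable subcategories of the lattice N5 (equivalently, exactly 22 weak equivalence sets on N5). -/
/-- The five-element nonmodular lattice `N₅` with `0 < A < C < 1`, `0 < B < 1`,
and `B` incomparable to `A` and `C`. -/
inductive N5 : Type
  | zero | A | B | C | one
  deriving DecidableEq

instance : Fintype N5 :=
  ⟨{N5.zero, N5.A, N5.B, N5.C, N5.one}, fun x => by cases x <;> simp⟩

namespace N5

def leBool : N5 → N5 → Bool
  | zero, _ => true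
  | _, one => true
  | A, A => true
  | A, C => true
  | B, B => true
  | C, C => true
  | _, _ => false

instance : LE N5 := ⟨fun x y => leBool x y = true⟩

instance : DecidableRel ((· ≤ ·) : N5 → N5 → Prop) :=
  fun x y => inferInstanceAs (Decidable (leBool x y = true))

def supFn (x y : N5) : N5 := if leBool x y then y else if leBool y x then x else one
def infFn (x y : N5) : N5 := if leBool x y then x else if leBool y x then y else zero

instance : Lattice N5 where
  le := (· ≤ ·)
  le_refl := by decide
  le_trans := by decide
  le_antisymm := by decide
  sup := supFn
  le_sup_left := by decide
  le_sup_right := by decide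
  sup_le := by decide
  inf := infFn
  inf_le_left := by decide
  inf_le_right := by decide
  le_inf := by decide

end N5

section Defs

variable {L : Type*} [Lattice L]

/-- `llp S a b`: `a ≤ b` and `(a, b)` has the left lifting property with respect to
every pair in `S`. -/
def llp (S : L → L → Prop) (a b : L) : Prop :=
  a ≤ b ∧ ∀ x y, S x y → a ≤ x → b ≤ y → b ≤ x

/-- `rlp S x y`: `x ≤ y` and every pair in `S` has the left lifting property with
respect to `(x, y)`. -/
def rlp (S : L → L → Prop) (x y : L) : Prop :=
  x ≤ y ∧ ∀ a b, S a b → a ≤ x → b ≤ y → b ≤ x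

/-- A transfer system: a reflexive transitive subrelation of `≤` closed under pullbacks. -/
structure IsTransferSystem (T : L → L → Prop) : Prop where
  subLE : ∀ x y, T x y → x ≤ y
  refl : ∀ x, T x x
  trans : ∀ x y z, T x y → T y z → T x z
  pullback : ∀ x y z, T x y → z ≤ y → T (x ⊓ z) z

/-- A cotransfer system: a reflexive transitive subrelation of `≤` closed under pushouts. -/
structure IsCotransferSystem (K : L → L → Prop) : Prop where
  subLE : ∀ x y, K x y → x ≤ y
  refl : ∀ x, K x x
  trans : ∀ x y z, K x y → K y z → K x z
  pushout : ∀ x y z, K x y → x ≤ z → K z (y ⊔ z)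

/-- A wide decomposable subcategory of a lattice. -/
structure IsWideDecomposable (W : L → L → Prop) : Prop where
  subLE : ∀ x y, W x y → x ≤ y
  refl : ∀ x, W x x
  trans : ∀ x y z, W x y → W y z → W x z
  decomp : ∀ x y z, W x z → x ≤ y → y ≤ z → W x y ∧ W y z

/-- A model structure on a lattice, given by weak equivalences `W`, cofibrations `C`
and fibrations `F`. -/
structure IsModelStructure (W C F : L → L → Prop) : Prop where
  W_subLE : ∀ x y, W x y → x ≤ y
  W_refl : ∀ x, W x x
  C_subLE : ∀ x y, C x y → x ≤ y
  C_refl : ∀ x, C x x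
  F_subLE : ∀ x y, F x y → x ≤ y
  F_refl : ∀ x, F x x
  two_three_comp : ∀ x y z, x ≤ y → y ≤ z → W x y → W y z → W x z
  two_three_right : ∀ x y z, x ≤ y → y ≤ z → W x y → W x z → W y z
  two_three_left : ∀ x y z, x ≤ y → y ≤ z → W y z → W x z → W x y
  lift_AC : ∀ x y, (C x y ∧ W x y) ↔ llp F x y
  lift_C : ∀ x y, C x y ↔ llp (fun a b => F a b ∧ W a b) x y
  lift_F : ∀ x y, F x y ↔ rlp (fun a b => C a b ∧ W a b) x y
  lift_AF : ∀ x y, (F x y ∧ W x y) ↔ rlp C x y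
  fact_C_AF : ∀ x y, x ≤ y → ∃ z, x ≤ z ∧ z ≤ y ∧ C x z ∧ F z y ∧ W z y
  fact_AC_F : ∀ x y, x ≤ y → ∃ z, x ≤ z ∧ z ≤ y ∧ C x z ∧ W x z ∧ F z y

/-- The smallest transfer system containing `S`: the intersection of all transfer
systems containing `S`. -/
def genTS (S : L → L → Prop) (x y : L) : Prop :=
  ∀ T : L → L → Prop, IsTransferSystem T → (∀ a b, S a b → T a b) → T x y

end Defs

/-- A bundled model structure on a lattice. -/
structure ModelStructure (L : Type*) [Lattice L] where
  W : L → L → Prop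
  C : L → L → Prop
  F : L → L → Prop
  isModel : IsModelStructure W C F

/-- `M'` is a left Bousfield localization of `M`: same cofibrations, more weak equivalences. -/
def IsLeftBousfieldLoc {L : Type*} [Lattice L] (M M' : ModelStructure L) : Prop :=
  M'.C = M.C ∧ ∀ x y, M.W x y → M'.W x y

/-- `M'` is a right Bousfield localization of `M`: same fibrations, more weak equivalences. -/
def IsRightBousfieldLoc {L : Type*} [Lattice L] (M M' : ModelStructure L) : Prop :=
  M'.F = M.F ∧ ∀ x y, M.W x y → M'.W x y


abbrev T8 := Bool × Bool × Bool × Bool × Bool × Bool × Bool × Bool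

open N5 in
def decode8 (t : T8) : N5 → N5 → Bool
  | zero, zero => true
  | A, A => true
  | B, B => true
  | C, C => true
  | one, one => true
  | zero, A => t.1
  | zero, B => t.2.1
  | zero, C => t.2.2.1
  | zero, one => t.2.2.2.1
  | A, C => t.2.2.2.2.1
  | A, one => t.2.2.2.2.2.1
  | B, one => t.2.2.2.2.2.2.1
  | C, one => t.2.2.2.2.2.2.2
  | _, _ => false

def pred8 (t : T8) : Prop :=
  (∀ x y : N5, decode8 t x y = true → x ≤ y) ∧
  (∀ x : N5, decode8 t x x = true) ∧
  (∀ x y z : N5, decode8 t x y = true → decode8 t y z = true → decode8 t x z = true) ∧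
  (∀ x y z : N5, decode8 t x z = true → x ≤ y → y ≤ z →
      decode8 t x y = true ∧ decode8 t y z = true)

instance : DecidablePred pred8 := fun _ => by unfold pred8; infer_instance

def f8 (t : {t : T8 // pred8 t}) : {W : N5 → N5 → Prop // IsWideDecomposable W} :=
  ⟨fun x y => decode8 t.1 x y = true,
    ⟨t.2.1, t.2.2.1, t.2.2.2.1, t.2.2.2.2⟩⟩

open Classical in
theorem f8_bijective : Function.Bijective f8 := by
  constructor
  · rintro ⟨t, ht⟩ ⟨t', ht'⟩ h
    have hW : (fun x y => decode8 t x y = true) = (fun x y => decode8 t' x y = true) :=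
      congrArg Subtype.val h
    have hb : ∀ x y, decode8 t x y = decode8 t' x y := by
      intro x y
      have h1 : (decode8 t x y = true) = (decode8 t' x y = true) :=
        congrFun (congrFun hW x) y
      revert h1
      cases decode8 t x y <;> cases decode8 t' x y <;> simp
    obtain ⟨a, b, c, d, e, f, g, i⟩ := t
    obtain ⟨a', b', c', d', e', f', g', i'⟩ := t'
    apply Subtype.ext
    have h1 := hb N5.zero N5.A
    have h2 := hb N5.zero N5.B
    have h3 := hb N5.zero N5.C
    have h4 := hb N5.zero N5.one
    have h5 := hb N5.A N5.C
    have h6 := hb N5.A N5.one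
    have h7 := hb N5.B N5.one
    have h8 := hb N5.C N5.one
    simp only [decode8] at h1 h2 h3 h4 h5 h6 h7 h8
    simp_all
  · rintro ⟨W, hW⟩
    set t : T8 := (decide (W N5.zero N5.A), decide (W N5.zero N5.B),
      decide (W N5.zero N5.C), decide (W N5.zero N5.one), decide (W N5.A N5.C),
      decide (W N5.A N5.one), decide (W N5.B N5.one), decide (W N5.C N5.one)) with ht
    have hfw : (fun x y => decode8 t x y = true) = W := by
      funext x y
      apply propext
      cases x <;> cases y <;>
        simp only [decode8, ht, decide_eq_true_eq] <;>
        first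
          | exact Iff.rfl
          | (simp only [true_iff]; exact hW.refl _)
          | (simp only [Bool.false_eq_true, false_iff]; intro h; exact absurd (hW.subLE _ _ h) (by decide))
    have hwd : IsWideDecomposable (fun x y => decode8 t x y = true) := hfw ▸ hW
    refine ⟨⟨t, hwd.subLE, hwd.refl, hwd.trans, hwd.decomp⟩, ?_⟩
    exact Subtype.ext hfw

/-- There are exactly 22 wide decomposable subcategories of `N5`. -/
theorem card_wide_decomposable_N5 :
    Nat.card {W : N5 → N5 → Prop // IsWideDecomposable W} = 22 := by
  rw [← Nat.card_eq_of_bijective f8 f8_bijective, Nat.card_eq_fintype_card]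
  decide
end

section
/- On any finite lattice L, the number of transfer systems equals the number of cotransfer systems: there is a bijection between the set of transfer systems on L and the set of cotransfer systems on L (given by T ↦ ^⧄T with inverse K ↦ K^⧄). -/
section Aux

variable {L : Type*} [Lattice L]

theorem llp_cots {T : L → L → Prop} (hT : IsTransferSystem T) :
    IsCotransferSystem (llp T) where
  subLE _ _ h := h.1
  refl x := ⟨le_rfl, fun _ _ _ hxu _ => hxu⟩
  trans x y z hxy hyz := ⟨hxy.1.trans hyz.1, fun u v huv hxu hzv =>
    hyz.2 u v huv (hxy.2 u v huv hxu (hyz.1.trans hzv)) hzv⟩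
  pushout x y z hxy hxz := ⟨le_sup_right, fun u v huv hzu hyzv =>
    sup_le (hxy.2 u v huv (hxz.trans hzu) (le_sup_left.trans hyzv)) hzu⟩

theorem rlp_ts {K : L → L → Prop} (hK : IsCotransferSystem K) :
    IsTransferSystem (rlp K) where
  subLE _ _ h := h.1
  refl x := ⟨le_rfl, fun _ _ _ _ hbx => hbx⟩
  trans x y z hxy hyz := ⟨hxy.1.trans hyz.1, fun a b hab hax hbz =>
    hxy.2 a b hab hax (hyz.2 a b hab (hax.trans hxy.1) hbz)⟩
  pullback x y z hxy hzy := ⟨inf_le_right, fun a b hab haxz hbz =>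
    le_inf (hxy.2 a b hab (haxz.trans inf_le_left) (hbz.trans hzy)) hbz⟩

theorem rlp_llp [Fintype L] {T : L → L → Prop} (hT : IsTransferSystem T) :
    rlp (llp T) = T := by
  ext x y
  constructor
  · rintro ⟨hxy, hr⟩
    classical
    set S : Set L := {w | x ≤ w ∧ w ≤ y ∧ T w y} with hS
    have hSinf : ∀ a ∈ S, ∀ b ∈ S, a ⊓ b ∈ S := by
      rintro a ⟨ha1, ha2, ha3⟩ b ⟨hb1, hb2, hb3⟩
      exact ⟨le_inf ha1 hb1, inf_le_right.trans hb2,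
        hT.trans _ _ _ (hT.pullback a y b ha3 hb2) hb3⟩
    set t : Finset L := Finset.univ.filter (· ∈ S) with ht
    have hyt : y ∈ t := by simp [ht, hS, hxy, hT.refl]
    have hne : t.Nonempty := ⟨y, hyt⟩
    set m := t.inf' hne id with hm
    have hmS : m ∈ S := Finset.inf'_mem S hSinf t hne id (by intro i hi; simpa [ht] using hi)
    have hmin : ∀ w ∈ S, m ≤ w := fun w hw =>
      Finset.inf'_le id (by simp [ht, hw] : w ∈ t)
    have hxm : x ≤ m := hmS.1
    have hlm : llp T x m := by
      refine ⟨hxm, fun u v huv hxu hmv => ?_⟩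
      have h1 : T (u ⊓ m) m := hT.pullback u v m huv hmv
      have h2 : (u ⊓ m) ∈ S := ⟨le_inf hxu hxm, inf_le_right.trans hmS.2.1,
        hT.trans _ _ _ h1 hmS.2.2⟩
      exact (hmin _ h2).trans inf_le_left
    have hmx : m ≤ x := hr x m hlm le_rfl hmS.2.1
    have hmx' : m = x := le_antisymm hmx hxm
    rw [← hmx']; exact hmS.2.2
  · intro hTxy
    exact ⟨hT.subLE _ _ hTxy, fun a b hab hax hby => hab.2 x y hTxy hax hby⟩

theorem llp_rlp [Fintype L] {K : L → L → Prop} (hK : IsCotransferSystem K) :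
    llp (rlp K) = K := by
  ext x y
  constructor
  · rintro ⟨hxy, hl⟩
    classical
    set S : Set L := {w | x ≤ w ∧ w ≤ y ∧ K x w} with hS
    have hSsup : ∀ a ∈ S, ∀ b ∈ S, a ⊔ b ∈ S := by
      rintro a ⟨ha1, ha2, ha3⟩ b ⟨hb1, hb2, hb3⟩
      exact ⟨ha1.trans le_sup_left, sup_le ha2 hb2,
        hK.trans _ _ _ hb3 (hK.pushout x a b ha3 hb1)⟩
    set t : Finset L := Finset.univ.filter (· ∈ S) with ht
    have hxt : x ∈ t := by simp [ht, hS, hxy, hK.refl]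
    have hne : t.Nonempty := ⟨x, hxt⟩
    set m := t.sup' hne id with hm
    have hmS : m ∈ S := Finset.sup'_mem S hSsup t hne id (by intro i hi; simpa [ht] using hi)
    have hmax : ∀ w ∈ S, w ≤ m := fun w hw =>
      Finset.le_sup' id (by simp [ht, hw] : w ∈ t)
    have hrm : rlp K m y := by
      refine ⟨hmS.2.1, fun a b hab ham hby => ?_⟩
      have h1 : K m (b ⊔ m) := hK.pushout a b m hab ham
      have h2 : (b ⊔ m) ∈ S := ⟨hmS.1.trans le_sup_right, sup_le hby hmS.2.1,
        hK.trans _ _ _ hmS.2.2 h1⟩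
      exact le_sup_left.trans (hmax _ h2)
    have hym : y ≤ m := hl m y hrm hmS.1 le_rfl
    have hm' : m = y := le_antisymm hmS.2.1 hym
    rw [← hm']; exact hmS.2.2
  · intro hKxy
    exact ⟨hK.subLE _ _ hKxy, fun u v huv hxu hyv => huv.2 x y hKxy hxu hyv⟩

end Aux

/-- On a finite lattice, transfer systems and cotransfer systems are in
bijection via `T ↦ ⧄T` with inverse `K ↦ K⧄`; in particular they are equinumerous. -/
theorem transfer_cotransfer_bijection (L : Type*) [Lattice L] [Fintype L] :
    Nat.card {T : L → L → Prop // IsTransferSystem T} =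
      Nat.card {K : L → L → Prop // IsCotransferSystem K} ∧
    ∃ e : {T : L → L → Prop // IsTransferSystem T} ≃
        {K : L → L → Prop // IsCotransferSystem K},
      (∀ T, (e T).val = llp T.val) ∧ (∀ K, (e.symm K).val = rlp K.val) := by
  let e : {T : L → L → Prop // IsTransferSystem T} ≃
      {K : L → L → Prop // IsCotransferSystem K} :=
    { toFun := fun T => ⟨llp T.val, llp_cots T.2⟩
      invFun := fun K => ⟨rlp K.val, rlp_ts K.2⟩
      left_inv := fun T => Subtype.ext (rlp_llp T.2)
      right_inv := fun K => Subtype.ext (llp_rlp K.2) }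
  exact ⟨Nat.card_congr e, e, fun T => rfl, fun K => rfl⟩
end

section
/- Exactly 8 transfer systems on N5 are generated by a single non-identity pair: the set {⟨{(x,y)}⟩ : x < y in N5} has cardinality 8, where ⟨S⟩ is the smallest transfer system containing S. -/
/-- Extra (non-reflexive) pairs in the transfer system generated by a single pair. -/
def extraB : N5 → N5 → N5 → N5 → Bool
  | .zero, .A, .zero, .A => true
  | .zero, .B, .zero, .B => true
  | .zero, .C, .zero, .A => true
  | .zero, .C, .zero, .C => true
  | .zero, .one, .zero, _ => true
  | .A, .C, .A, .C => true
  | .A, .one, .zero, .B => true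
  | .A, .one, .A, .C => true
  | .A, .one, .A, .one => true
  | .B, .one, .zero, .A => true
  | .B, .one, .zero, .C => true
  | .B, .one, .B, .one => true
  | .C, .one, .zero, .B => true
  | .C, .one, .C, .one => true
  | _, _, _, _ => false

/-- Candidate transfer system generated by the pair `(x, y)`. -/
def cloB (x y a b : N5) : Bool := decide (a = b) || extraB x y a b

lemma clo_isTS (x y : N5) : IsTransferSystem (fun a b => cloB x y a b = true) := by
  refine ⟨?_, ?_, ?_, ?_⟩ <;> (revert x y; decide)

/-- The eight non-identity pairs of `N5`. -/
def gens : Fin 8 → N5 × N5 :=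
  ![(.zero, .A), (.zero, .B), (.zero, .C), (.zero, .one),
    (.A, .C), (.A, .one), (.B, .one), (.C, .one)]

lemma gens_le_ne : ∀ i : Fin 8, (gens i).1 ≤ (gens i).2 ∧ (gens i).1 ≠ (gens i).2 := by
  decide

lemma clo_gen_self : ∀ i : Fin 8, cloB (gens i).1 (gens i).2 (gens i).1 (gens i).2 = true := by
  decide

lemma inj_decide : ∀ i j : Fin 8,
    cloB (gens j).1 (gens j).2 (gens i).1 (gens i).2 = true →
    cloB (gens i).1 (gens i).2 (gens j).1 (gens j).2 = true → i = j := by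
  decide

/-- The map from pairs to singly generated transfer systems. -/
def eGen (i : Fin 8) :
    {T : N5 → N5 → Prop // ∃ x y : N5, x < y ∧ T = genTS (fun a b => a = x ∧ b = y)} :=
  ⟨genTS (fun a b => a = (gens i).1 ∧ b = (gens i).2),
    (gens i).1, (gens i).2, lt_of_le_of_ne (gens_le_ne i).1 (gens_le_ne i).2, rfl⟩

lemma inj_aux (p q : N5 × N5) (hq : cloB q.1 q.2 q.1 q.2 = true)
    (h : genTS (fun a b => a = p.1 ∧ b = p.2) = genTS (fun a b => a = q.1 ∧ b = q.2)) :
    cloB q.1 q.2 p.1 p.2 = true := by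
  have hm : genTS (fun a b => a = p.1 ∧ b = p.2) p.1 p.2 := fun T _ hS => hS _ _ ⟨rfl, rfl⟩
  rw [h] at hm
  exact hm _ (clo_isTS q.1 q.2) (by rintro a b ⟨rfl, rfl⟩; exact hq)

lemma eGen_injective : Function.Injective eGen := by
  intro i j hij
  have h := congrArg Subtype.val hij
  have h1 := inj_aux (gens i) (gens j) (clo_gen_self j) h
  have h2 := inj_aux (gens j) (gens i) (clo_gen_self i) h.symm
  exact inj_decide i j h1 h2

lemma eGen_surjective : Function.Surjective eGen := by
  rintro ⟨T, x, y, hxy, rfl⟩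
  have hle := hxy.le
  have hne := hxy.ne
  cases x <;> cases y <;>
    first
      | exact absurd rfl hne
      | exact absurd hle (by decide)
      | exact ⟨0, rfl⟩
      | exact ⟨1, rfl⟩
      | exact ⟨2, rfl⟩
      | exact ⟨3, rfl⟩
      | exact ⟨4, rfl⟩
      | exact ⟨5, rfl⟩
      | exact ⟨6, rfl⟩
      | exact ⟨7, rfl⟩

/-- Exactly 8 transfer systems on `N5` are generated by a single
non-identity pair. -/
theorem card_singly_generated_transfer_systems_N5 :
    Nat.card {T : N5 → N5 → Prop //
      ∃ x y : N5, x < y ∧ T = genTS (fun a b => a = x ∧ b = y)} = 8 := by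
  rw [← Nat.card_eq_of_bijective eGen ⟨eGen_injective, eGen_surjective⟩]
  simp
end
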